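/- Let f be a perfect k-coloring of the Hamming graph H(n,2) with quotient matrix S, let λ_0 > λ_1 > … > λ_l be the distinct eigenvalues of S, and let i be any color. Then there exists a unique tuple of real numbers (a_1,…,a_l) such that for every t = 0,1,…,l−1: Σ_{j=1}^{l} λ_j^t · a_j = |f^{-1}(i)| · (S^t)_{i,i} − (|f^{-1}(i)|² / 2^n) · λ_0^t (where (S^0)_{i,i} = 1); moreover, for every j = 1,…,l the number 2^n · a_j is a non-negative integer. -/

import Mathlib

/-- The Hamming graph `H(n,q)`: vertices are `Fin n → ZMod q`, two vertices are
adjacent iff their Hamming distance is `1`. -/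
def hammingGraph (n q : ℕ) : SimpleGraph (Fin n → ZMod q) where
  Adj x y := hammingDist x y = 1
  symm := by constructor; intro x y h; exact (hammingDist_comm y x).trans h
  loopless := by constructor; intro x h; simp [hammingDist_self] at h

/-- The distance from a vertex `x` to a code `C` in a graph `G`. -/
noncomputable def distToCode {V : Type*} (G : SimpleGraph V) (C : Set V) (x : V) : ℕ :=
  sInf {d : ℕ | ∃ c ∈ C, G.dist x c = d}

/-- The code distance of a code `C` in a graph `G`: the minimum distance between
two distinct codewords. -/
noncomputable def codeDist {V : Type*} (G : SimpleGraph V) (C : Set V) : ℕ :=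
  sInf {d : ℕ | ∃ x ∈ C, ∃ y ∈ C, x ≠ y ∧ G.dist x y = d}

/-- A code `C` is `1`-perfect if every vertex is at distance at most `1`
from exactly one codeword. -/
def IsOnePerfect {V : Type*} (G : SimpleGraph V) (C : Set V) : Prop :=
  ∀ x, ∃! c, c ∈ C ∧ G.dist x c ≤ 1

/-- Deleting the `i`-th coordinate of a tuple. -/
def deleteCoord {α : Type*} {n : ℕ} (i : Fin n) (c : Fin n → α) (j : Fin (n - 1)) : α :=
  c (Fin.cast (show n - 1 + 1 = n by have := i.pos; omega)
      ((Fin.cast (show n = n - 1 + 1 by have := i.pos; omega) i).succAbove j))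

/-- The projection (puncturing) of a code in `H(n,q)` at coordinate `i`. -/
def hammingProj {n q : ℕ} (i : Fin n) (C : Set (Fin n → ZMod q)) :
    Set (Fin (n - 1) → ZMod q) :=
  (deleteCoord i) '' C

/-- A code `C` in `H(n,q)` is extended `1`-perfect if it is nonempty, its code distance
is `4`, and its projection at some coordinate is a `1`-perfect code in `H(n-1,q)`. -/
def IsExtOnePerfectH (n q : ℕ) (C : Set (Fin n → ZMod q)) : Prop :=
  C.Nonempty ∧ codeDist (hammingGraph n q) C = 4 ∧
    ∃ i : Fin n, IsOnePerfect (hammingGraph (n - 1) q) (hammingProj i C)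

/-- A perfect coloring of `G` in `k` colors with quotient matrix `S`: a surjective map
`f` onto the colors such that every vertex of color `i` has exactly `S i j` neighbours
of color `j`. -/
def IsPerfectColoring {V : Type*} (G : SimpleGraph V) {k : ℕ} (f : V → Fin k)
    (S : Matrix (Fin k) (Fin k) ℤ) : Prop :=
  Function.Surjective f ∧
    ∀ v j, (({u | G.Adj v u ∧ f u = j} : Set V).ncard : ℤ) = S (f v) j

/-- A code `C` in `G` is completely regular with quotient matrix `S` if the distance
coloring `x ↦ d(x, C)` is a perfect coloring with quotient matrix `S`. -/
def IsCompletelyRegular {V : Type*} (G : SimpleGraph V) (C : Set V) {k : ℕ}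
    (S : Matrix (Fin k) (Fin k) ℤ) : Prop :=
  ∃ h : ∀ x, distToCode G C x < k,
    IsPerfectColoring G (fun x => (⟨distToCode G C x, h x⟩ : Fin k)) S

/-- The connecting set of the Shrikhande graph as a Cayley graph on `ℤ₄ × ℤ₄`. -/
def shrikhandeSet : Set (ZMod 4 × ZMod 4) :=
  {(0, 1), (1, 0), (0, 3), (3, 0), (1, 1), (3, 3)}

/-- The vertex set of the graph `D(m,n)`. -/
abbrev DoobV (m n : ℕ) := (Fin m → ZMod 4 × ZMod 4) × (Fin n → ZMod 4)

/-- The graph `D(m,n)`: the direct product of `m` copies of the Shrikhande graph and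
`n` copies of `K₄`. Two vertices are adjacent iff they differ in exactly one
coordinate and, if it is a Shrikhande coordinate, the difference there lies in the
connecting set. For `m > 0` it is a Doob graph; `D(0,n) = H(n,4)`. -/
def doobGraph (m n : ℕ) : SimpleGraph (DoobV m n) :=
  SimpleGraph.fromRel (fun x y =>
    (∃ i, x.1 i - y.1 i ∈ shrikhandeSet ∧ (∀ j, j ≠ i → x.1 j = y.1 j) ∧ x.2 = y.2) ∨
    (∃ i, x.2 i ≠ y.2 i ∧ (∀ j, j ≠ i → x.2 j = y.2 j) ∧ x.1 = y.1))

/-- The projection (puncturing) of a code in `D(m,n)` at the `K₄` coordinate `i`. -/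
def doobProj {m n : ℕ} (i : Fin n) (C : Set (DoobV m n)) : Set (DoobV m (n - 1)) :=
  (fun x => (x.1, deleteCoord i x.2)) '' C

/-- A code `C` in `D(m,n)`, `n ≥ 1`, is extended `1`-perfect if it is nonempty, its code
distance is `4`, and its projection at some `K₄` coordinate is a `1`-perfect code in
`D(m,n-1)`. A code `C` in `D(m,0)` is extended `1`-perfect if it is nonempty, its code
distance is `4`, and `2m = (4^l+2)/3` and `|C| = 4^(2m-l-1)` for some `l ≥ 1`. -/
def IsExtOnePerfectD (m n : ℕ) (C : Set (DoobV m n)) : Prop :=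
  C.Nonempty ∧ codeDist (doobGraph m n) C = 4 ∧
    (if n = 0 then
        ∃ l : ℕ, 0 < l ∧ 3 * (2 * m) = 4 ^ l + 2 ∧ C.ncard = 4 ^ (2 * m - l - 1)
      else ∃ i : Fin n, IsOnePerfect (doobGraph m (n - 1)) (doobProj i C))


/-!
The Walsh characters `χ_w(x) = (-1)^(w ⬝ x)` of `(ZMod 2)^n` are orthogonal eigenvectors of the
adjacency matrix `A` of `H(n,2)`, with eigenvalue `n - 2|w|`. For the colour class
`C = f⁻¹{i}` put `ĉ(w) = ∑_{x ∈ C} χ_w(x) ∈ ℤ`; Parseval gives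
`∑_w (n - 2|w|)^t ĉ(w)^2 = 2^n ⟨1_C, A^t 1_C⟩ = 2^n |C| (S^t)_{ii}`.
If `ĉ(w) ≠ 0`, pushing `χ_w` forward along `f` gives a left eigenvector of `S`, so `n - 2|w|` is
an eigenvalue of `S`. The largest eigenvalue of `S` is `n`, which is `n - 2|w|` only for `w = 0`,
where `ĉ(0) = |C|`. Grouping the sum by eigenvalue, `a_j = 2^(-n) ∑_{n - 2|w| = λ_j} ĉ(w)^2`
solves the system, and the Vandermonde determinant makes the solution unique.
-/

open Finset Matrix SimpleGraph

namespace IsPerfectColoring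

variable {V : Type*} [Fintype V] {G : SimpleGraph V} [DecidableRel G.Adj]
  {k : ℕ} {f : V → Fin k} {S : Matrix (Fin k) (Fin k) ℤ}

theorem card_neighborFinset_filter (hf : IsPerfectColoring G f S) (v : V) (j : Fin k) :
    (#{u ∈ G.neighborFinset v | f u = j} : ℤ) = S (f v) j := by
  rw [← hf.2 v j, ← Set.ncard_coe_finset]
  congr
  ext u
  simp

theorem sum_neighborFinset_comp (hf : IsPerfectColoring G f S) {R : Type*} [CommRing R]
    (g : Fin k → R) (v : V) :
    ∑ u ∈ G.neighborFinset v, g (f u) = ∑ j, (S (f v) j : R) * g j := by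
  rw [← sum_fiberwise_of_maps_to (fun u _ => mem_univ (f u))]
  refine sum_congr rfl fun j _ => ?_
  rw [sum_congr rfl fun u hu => by rw [(mem_filter.mp hu).2], sum_const, nsmul_eq_mul,
    ← hf.card_neighborFinset_filter v j]
  push_cast
  rfl

theorem adjMatrix_mulVec_comp (hf : IsPerfectColoring G f S) {R : Type*} [CommRing R]
    (g : Fin k → R) :
    G.adjMatrix R *ᵥ (g ∘ f) = (S.map (↑) *ᵥ g) ∘ f := by
  ext v
  exact (adjMatrix_mulVec_apply ..).trans (hf.sum_neighborFinset_comp g v)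

theorem adjMatrix_pow_mulVec_comp [DecidableEq V] (hf : IsPerfectColoring G f S) {R : Type*}
    [CommRing R] (t : ℕ) (g : Fin k → R) :
    (G.adjMatrix R ^ t) *ᵥ (g ∘ f) = (S.map (↑) ^ t *ᵥ g) ∘ f := by
  induction t with
  | zero => simp
  | succ t ih => rw [pow_succ', ← mulVec_mulVec, ih, hf.adjMatrix_mulVec_comp, pow_succ',
      mulVec_mulVec]

theorem sum_row_eq_degree (hf : IsPerfectColoring G f S) (v : V) :
    ∑ j, S (f v) j = G.degree v := by
  simpa [← card_neighborFinset_eq_degree] using (hf.sum_neighborFinset_comp (R := ℤ) 1 v).symm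

/-- Gershgorin's theorem: `S` has non-negative entries and row sums `d`. -/
theorem le_of_mulVec_eq_smul {d : ℕ} (hf : IsPerfectColoring G f S) (hG : G.IsRegularOfDegree d)
    {μ : ℝ} {v : Fin k → ℝ} (hv0 : v ≠ 0) (hv : S.map (↑) *ᵥ v = μ • v) : μ ≤ d := by
  have hμ : Module.End.HasEigenvalue (toLin' (S.map ((↑) : ℤ → ℝ))) μ :=
    Module.End.hasEigenvalue_of_hasEigenvector
      ⟨Module.End.mem_eigenspace_iff.mpr (by rwa [toLin'_apply]), hv0⟩
  obtain ⟨m, hm⟩ := eigenvalue_mem_ball hμ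
  obtain ⟨v, rfl⟩ := hf.1 m
  have hnonneg : ∀ j, 0 ≤ S (f v) j := fun j => hf.2 v j ▸ Nat.cast_nonneg _
  have hrow : ∑ j, (S (f v) j : ℝ) = d := by
    exact_mod_cast (hf.sum_row_eq_degree v).trans (congrArg _ (hG v))
  calc μ ≤ (S (f v) (f v) : ℝ) + ∑ j ∈ univ.erase (f v), ‖(S (f v) j : ℝ)‖ := by
        have := (abs_sub_le_iff.mp (Metric.mem_closedBall.mp hm)).1
        simp only [map_apply] at this
        linarith
    _ = d := by
        rw [← hrow, ← add_sum_erase _ _ (mem_univ (f v))]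
        congr 1
        refine sum_congr rfl fun j _ => ?_
        rw [Real.norm_eq_abs, abs_of_nonneg (by exact_mod_cast hnonneg j)]

/-- The push-forward `d` of an eigenvector `φ` of the adjacency matrix satisfies
`d ᵥ* S = μ • d`, so `μ` is an eigenvalue of `S` as soon as `d ≠ 0`. -/
theorem exists_mulVec_eq_smul_of_adjMatrix {K : Type*} [Field K] (hf : IsPerfectColoring G f S)
    {φ : V → K} {μ : K} (hφ : G.adjMatrix K *ᵥ φ = μ • φ) {i : Fin k}
    (hi : ∑ x with f x = i, φ x ≠ 0) :
    ∃ v : Fin k → K, v ≠ 0 ∧ S.map (↑) *ᵥ v = μ • v := by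
  set d : Fin k → K := fun m => ∑ x with f x = m, φ x
  have hd : ∀ g : Fin k → K, d ⬝ᵥ g = φ ⬝ᵥ (g ∘ f) := fun g => by
    simp only [dotProduct, d, sum_mul, Function.comp_apply]
    rw [← sum_fiberwise_of_maps_to (fun u _ => mem_univ (f u)) (fun x => φ x * g (f x))]
    exact sum_congr rfl fun m _ => sum_congr rfl fun x hx => by rw [(mem_filter.mp hx).2]
  have hdS : ∀ g : Fin k → K, d ⬝ᵥ (S.map (↑) *ᵥ g) = μ * d ⬝ᵥ g := fun g => by
    rw [hd, hd, ← hf.adjMatrix_mulVec_comp, dotProduct_mulVec, ← mulVec_transpose,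
      transpose_adjMatrix, hφ, smul_dotProduct, smul_eq_mul]
  have hleft : d ᵥ* (S.map (↑) - μ • 1) = 0 := by
    ext r
    have := hdS (Pi.single r 1)
    rw [dotProduct_mulVec, dotProduct_single_one, dotProduct_single_one] at this
    simp [vecMul_sub, vecMul_smul, this]
  obtain ⟨v, hv0, hv⟩ := exists_mulVec_eq_zero_iff.mpr
    (exists_vecMul_eq_zero_iff.mp ⟨d, fun h => hi (congrFun h i), hleft⟩)
  refine ⟨v, hv0, ?_⟩
  rwa [sub_mulVec, smul_mulVec, one_mulVec, sub_eq_zero] at hv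

end IsPerfectColoring

instance (n q : ℕ) : DecidableRel (hammingGraph n q).Adj :=
  fun x y => inferInstanceAs (Decidable (hammingDist x y = 1))

theorem ZMod.two_eq_zero_or_eq_one (a : ZMod 2) : a = 0 ∨ a = 1 := by
  revert a
  decide

section HammingCube

variable {n : ℕ}

theorem hammingNorm_eq_one_iff_exists_single {z : Fin n → ZMod 2} :
    hammingNorm z = 1 ↔ ∃ i, z = Pi.single i 1 := by
  have hne : ∀ a : ZMod 2, a ≠ 0 → a = 1 := by decide
  simp only [hammingNorm, card_eq_one, Finset.ext_iff, mem_filter, mem_univ, true_and,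
    mem_singleton]
  refine exists_congr fun i => ⟨fun h => funext fun j => ?_, ?_⟩
  · by_cases hj : j = i
    · subst hj
      simpa using hne _ ((h j).mpr rfl)
    · simpa [hj] using (h j).not.mpr hj
  · rintro rfl j
    by_cases hj : j = i <;> simp [hj]

theorem hammingGraph_two_adj_iff {x y : Fin n → ZMod 2} :
    (hammingGraph n 2).Adj x y ↔ ∃ i, y = x + Pi.single i 1 := by
  change hammingDist x y = 1 ↔ _
  simp only [hammingDist_eq_hammingNorm, hammingNorm_eq_one_iff_exists_single,
    neg_add_eq_iff_eq_add]

theorem hammingGraph_two_neighborFinset (x : Fin n → ZMod 2) :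
    (hammingGraph n 2).neighborFinset x = univ.image fun i => x + Pi.single i 1 := by
  ext y
  simp [hammingGraph_two_adj_iff, eq_comm]

theorem injective_add_single (x : Fin n → ZMod 2) :
    Function.Injective fun i => x + Pi.single i (1 : ZMod 2) := fun i j h => by
  by_contra hij
  simpa [hij] using congrFun (add_left_cancel h) i

theorem hammingGraph_two_sum_neighborFinset {M : Type*} [AddCommMonoid M]
    (x : Fin n → ZMod 2) (h : (Fin n → ZMod 2) → M) :
    ∑ y ∈ (hammingGraph n 2).neighborFinset x, h y = ∑ i, h (x + Pi.single i 1) := by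
  rw [hammingGraph_two_neighborFinset, sum_image fun i _ j _ hij => injective_add_single x hij]

theorem hammingGraph_two_isRegularOfDegree : (hammingGraph n 2).IsRegularOfDegree n := by
  intro x
  rw [← card_neighborFinset_eq_degree, hammingGraph_two_neighborFinset,
    card_image_of_injective _ (injective_add_single x), card_univ, Fintype.card_fin]

variable {R : Type*} [CommRing R]

def walsh (w x : Fin n → ZMod 2) : R := ∏ i, (-1) ^ (w i * x i).val

def walshEigenvalue (w : Fin n → ZMod 2) : ℤ := n - 2 * hammingNorm w

theorem Int.cast_walsh (w x : Fin n → ZMod 2) : ((walsh w x : ℤ) : R) = walsh w x := by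
  simp [walsh]

theorem walsh_zero_left (x : Fin n → ZMod 2) : (walsh 0 x : R) = 1 := by
  simp [walsh]

theorem walsh_add_right (w x y : Fin n → ZMod 2) :
    (walsh w (x + y) : R) = walsh w x * walsh w y := by
  have hmod : ∀ a b c : ZMod 2, (a * (b + c)).val % 2 = ((a * b).val + (a * c).val) % 2 := by
    decide
  simp only [walsh, ← prod_mul_distrib, ← pow_add, Pi.add_apply]
  refine prod_congr rfl fun i _ => ?_
  rw [neg_one_pow_eq_pow_mod_two, hmod, ← neg_one_pow_eq_pow_mod_two]

theorem walsh_single (w : Fin n → ZMod 2) (i : Fin n) :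
    (walsh w (Pi.single i 1) : R) = (-1) ^ (w i).val := by
  rw [walsh, prod_eq_single i (fun j _ hj => by simp [hj]) (by simp)]
  simp

theorem sum_walsh_single (w : Fin n → ZMod 2) :
    ∑ i, (walsh w (Pi.single i 1) : R) = walshEigenvalue w := by
  have hsign : ∀ a : ZMod 2, ((-1) ^ a.val : R) = 1 - 2 * if a ≠ 0 then 1 else 0 := by
    intro a
    rcases ZMod.two_eq_zero_or_eq_one a with rfl | rfl
    · simp
    · simp [ZMod.val_one]
      norm_num
  simp only [walsh_single, hsign, sum_sub_distrib, ← mul_sum, sum_boole, walshEigenvalue,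
    hammingNorm]
  simp

theorem adjMatrix_mulVec_walsh (w : Fin n → ZMod 2) :
    (hammingGraph n 2).adjMatrix R *ᵥ walsh w = (walshEigenvalue w : R) • walsh w := by
  ext x
  rw [adjMatrix_mulVec_apply, hammingGraph_two_sum_neighborFinset]
  simp only [walsh_add_right, ← mul_sum, sum_walsh_single, Pi.smul_apply, smul_eq_mul, mul_comm]

theorem adjMatrix_pow_mulVec_walsh (w : Fin n → ZMod 2) (t : ℕ) :
    ((hammingGraph n 2).adjMatrix R ^ t) *ᵥ walsh w = (walshEigenvalue w : R) ^ t • walsh w := by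
  induction t with
  | zero => simp
  | succ t ih => rw [pow_succ', ← mulVec_mulVec, ih, mulVec_smul, adjMatrix_mulVec_walsh,
      smul_smul, pow_succ]

theorem walsh_dotProduct_adjMatrix_pow_mulVec (w : Fin n → ZMod 2) (t : ℕ)
    (h : (Fin n → ZMod 2) → R) :
    walsh w ⬝ᵥ (((hammingGraph n 2).adjMatrix R ^ t) *ᵥ h)
      = (walshEigenvalue w : R) ^ t * (walsh w ⬝ᵥ h) := by
  rw [dotProduct_mulVec, ← mulVec_transpose, transpose_pow, transpose_adjMatrix,
    adjMatrix_pow_mulVec_walsh, smul_dotProduct, smul_eq_mul]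

theorem sum_walsh_mul_walsh (x y : Fin n → ZMod 2) :
    ∑ w, (walsh w x * walsh w y : R) = if x = y then 2 ^ n else 0 := by
  have hcoord : ∀ b c : ZMod 2,
      ∑ a : ZMod 2, ((-1) ^ (a * b).val * (-1) ^ (a * c).val : R) = if b = c then 2 else 0 := by
    intro b c
    rw [show (univ : Finset (ZMod 2)) = {0, 1} from rfl, sum_pair zero_ne_one]
    rcases ZMod.two_eq_zero_or_eq_one b with rfl | rfl <;>
      rcases ZMod.two_eq_zero_or_eq_one c with rfl | rfl <;> simp [ZMod.val_one] <;> norm_num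
  simp only [walsh, ← prod_mul_distrib]
  rw [← Fintype.piFinset_univ, ← prod_univ_sum (fun _ => univ)
    (fun i a => ((-1) ^ (a * x i).val * (-1) ^ (a * y i).val : R))]
  simp [hcoord, prod_ite_zero, funext_iff]

theorem sum_walsh_dotProduct_mul (g h : (Fin n → ZMod 2) → R) :
    ∑ w, (walsh w ⬝ᵥ g) * (walsh w ⬝ᵥ h) = 2 ^ n * (g ⬝ᵥ h) := by
  calc ∑ w, (walsh w ⬝ᵥ g) * (walsh w ⬝ᵥ h)
      = ∑ x, ∑ y, g x * h y * ∑ w, walsh w x * walsh w y := by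
        simp only [dotProduct, sum_mul_sum]
        rw [sum_comm]
        refine sum_congr rfl fun x _ => ?_
        rw [sum_comm]
        refine sum_congr rfl fun y _ => ?_
        rw [mul_sum]
        exact sum_congr rfl fun w _ => by ring
    _ = 2 ^ n * (g ⬝ᵥ h) := by
        simp [sum_walsh_mul_walsh, dotProduct, mul_sum, mul_comm]

theorem walshEigenvalue_eq_iff (w : Fin n → ZMod 2) : walshEigenvalue w = n ↔ w = 0 := by
  rw [walshEigenvalue, ← hammingNorm_eq_zero]
  omega

def walshCoeff (C : Finset (Fin n → ZMod 2)) (w : Fin n → ZMod 2) : ℤ := ∑ x ∈ C, walsh w x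

/-- `2^n` times the weight `a_j` that the statement attaches to the eigenvalue `μ = λ_j`. -/
noncomputable def walshWeight (C : Finset (Fin n → ZMod 2)) (μ : ℝ) : ℤ :=
  ∑ w with (walshEigenvalue w : ℝ) = μ, walshCoeff C w ^ 2

theorem walshCoeff_zero (C : Finset (Fin n → ZMod 2)) : walshCoeff C 0 = #C := by
  simp [walshCoeff, walsh_zero_left]

theorem walshWeight_nonneg (C : Finset (Fin n → ZMod 2)) (μ : ℝ) : 0 ≤ walshWeight C μ :=
  sum_nonneg fun _ _ => sq_nonneg _

theorem walshWeight_natCast (C : Finset (Fin n → ZMod 2)) : walshWeight C n = #C ^ 2 := by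
  have : ({w | (walshEigenvalue w : ℝ) = n} : Finset (Fin n → ZMod 2)) = {0} := by
    ext w
    rw [mem_filter, mem_singleton, ← walshEigenvalue_eq_iff]
    norm_cast
    simp
  rw [walshWeight, this, sum_singleton, walshCoeff_zero]

end HammingCube

theorem sum_eq_sum_fiberwise_of_injective {α β γ M : Type*} [Fintype α] [Fintype β]
    [DecidableEq γ] [AddCommMonoid M] {g : α → γ} {e : β → γ} (he : Function.Injective e)
    {F : α → M} (hF : ∀ a, F a ≠ 0 → ∃ b, e b = g a) :
    ∑ a, F a = ∑ b, ∑ a with g a = e b, F a := by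
  rw [← sum_image (f := fun y => ∑ a with g a = y, F a) fun b _ b' _ h => he h,
    sum_fiberwise_eq_sum_filter, sum_filter_of_ne]
  intro a _ ha
  obtain ⟨b, hb⟩ := hF a ha
  exact mem_image.mpr ⟨b, mem_univ b, hb⟩

theorem eq_of_forall_sum_pow_mul_eq {K : Type*} [CommRing K] [IsDomain K] {l : ℕ}
    {x a b : Fin l → K} (hx : Function.Injective x)
    (h : ∀ t < l, ∑ j, x j ^ t * a j = ∑ j, x j ^ t * b j) : a = b := by
  rw [← sub_eq_zero]
  refine eq_zero_of_forall_pow_sum_mul_pow_eq_zero hx fun t => ?_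
  simp only [Pi.sub_apply, sub_mul, sum_sub_distrib, sub_eq_zero]
  simpa only [mul_comm] using h t t.isLt

namespace IsPerfectColoring

variable {n k : ℕ} {f : (Fin n → ZMod 2) → Fin k} {S : Matrix (Fin k) (Fin k) ℤ}

theorem exists_mulVec_eq_walshEigenvalue_smul (hf : IsPerfectColoring (hammingGraph n 2) f S)
    {i : Fin k} {w : Fin n → ZMod 2} (hw : walshCoeff {x | f x = i} w ≠ 0) :
    ∃ v : Fin k → ℝ, v ≠ 0 ∧ S.map (↑) *ᵥ v = (walshEigenvalue w : ℝ) • v :=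
  hf.exists_mulVec_eq_smul_of_adjMatrix (adjMatrix_mulVec_walsh w) (i := i)
    (by simpa [walshCoeff, Int.cast_walsh] using (Int.cast_ne_zero (α := ℝ)).mpr hw)

theorem sum_walshEigenvalue_pow_mul_sq (hf : IsPerfectColoring (hammingGraph n 2) f S)
    (i : Fin k) (t : ℕ) :
    ∑ w, walshEigenvalue w ^ t * walshCoeff {x | f x = i} w ^ 2
      = 2 ^ n * (#{x | f x = i} * (S ^ t) i i) := by
  set χ : (Fin n → ZMod 2) → ℤ := Pi.single i 1 ∘ f
  have hχ : ∀ φ : (Fin n → ZMod 2) → ℤ, φ ⬝ᵥ χ = ∑ x with f x = i, φ x := fun φ => by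
    simp [χ, dotProduct, Pi.single_apply, sum_filter]
  have hpow := hf.adjMatrix_pow_mulVec_comp (R := ℤ) t (Pi.single i 1)
  rw [show S.map (Int.cast : ℤ → ℤ) = S from map_id S] at hpow
  calc ∑ w, walshEigenvalue w ^ t * walshCoeff {x | f x = i} w ^ 2
      = ∑ w, (walsh w ⬝ᵥ χ) * (walsh w ⬝ᵥ ((hammingGraph n 2).adjMatrix ℤ ^ t *ᵥ χ)) := by
        simp only [walsh_dotProduct_adjMatrix_pow_mulVec, hχ, Int.cast_id, walshCoeff]
        exact sum_congr rfl fun w _ => by ring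
    _ = 2 ^ n * (χ ⬝ᵥ ((hammingGraph n 2).adjMatrix ℤ ^ t *ᵥ χ)) :=
        sum_walsh_dotProduct_mul _ _
    _ = 2 ^ n * (#{x | f x = i} * (S ^ t) i i) := by
        rw [hpow, dotProduct_comm, hχ, sum_congr rfl fun x hx => by
          rw [Function.comp_apply, (mem_filter.mp hx).2, mulVec_single_one], sum_const,
          nsmul_eq_mul]
        rfl

theorem sum_pow_mul_walshWeight (hf : IsPerfectColoring (hammingGraph n 2) f S) (i : Fin k)
    {m : ℕ} {L : Fin m → ℝ} (hL : Function.Injective L)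
    (hspec : ∀ μ : ℝ, (∃ v : Fin k → ℝ, v ≠ 0 ∧ S.map (↑) *ᵥ v = μ • v) → ∃ j, L j = μ)
    (t : ℕ) :
    ∑ j, L j ^ t * walshWeight {x | f x = i} (L j) = 2 ^ n * (#{x | f x = i} * (S ^ t) i i) := by
  have hZ := congrArg (Int.cast : ℤ → ℝ) (hf.sum_walshEigenvalue_pow_mul_sq i t)
  push_cast at hZ
  rw [← hZ, sum_eq_sum_fiberwise_of_injective hL (g := fun w => (walshEigenvalue w : ℝ))]
  · refine sum_congr rfl fun j _ => ?_
    simp only [walshWeight, Int.cast_sum, Int.cast_pow, mul_sum]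
    exact sum_congr rfl fun w hw => by rw [(mem_filter.mp hw).2]
  · intro w hw
    refine hspec _ (hf.exists_mulVec_eq_walshEigenvalue_smul (i := i) fun h => hw ?_)
    rw [h]
    simp

theorem eq_degree_of_strictAnti (hf : IsPerfectColoring (hammingGraph n 2) f S) {m : ℕ}
    {L : Fin (m + 1) → ℝ} (hmono : StrictAnti L)
    (heig : ∀ μ : ℝ, (∃ v : Fin k → ℝ, v ≠ 0 ∧ S.map (↑) *ᵥ v = μ • v) ↔ ∃ j, L j = μ) :
    L 0 = n := by
  classical
  obtain ⟨v, hv0, hv⟩ := (heig (L 0)).mpr ⟨0, rfl⟩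
  have hcoeff : walshCoeff {x | f x = f 0} 0 ≠ 0 := by
    rw [walshCoeff_zero, Nat.cast_ne_zero, ← pos_iff_ne_zero, card_pos]
    exact ⟨0, by simp⟩
  obtain ⟨j, hj⟩ := (heig _).mp (hf.exists_mulVec_eq_walshEigenvalue_smul hcoeff)
  rw [(walshEigenvalue_eq_iff 0).mpr rfl, Int.cast_natCast] at hj
  exact le_antisymm (hf.le_of_mulVec_eq_smul hammingGraph_two_isRegularOfDegree hv0 hv)
    (hj ▸ hmono.antitone (Fin.zero_le j))

end IsPerfectColoring

/-- Theorem 1 for `H(n,2)` (Statement 2): for a perfect coloring `f` of `H(n,2)` with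
quotient matrix `S` whose distinct eigenvalues are `L 0 > L 1 > … > L l`, and any color
`i`, the Vandermonde system has a unique solution `(a 0, …, a (l-1))` (indexed so that
`a j` corresponds to the eigenvalue `L (j+1)`), and `2^n * a j` is a non-negative
integer for every `j`. -/
theorem statement2 (n : ℕ) {k l : ℕ} (f : (Fin n → ZMod 2) → Fin k)
    (S : Matrix (Fin k) (Fin k) ℤ)
    (hf : IsPerfectColoring (hammingGraph n 2) f S)
    (L : Fin (l + 1) → ℝ) (hmono : StrictAnti L)
    (heig : ∀ x : ℝ,
      (∃ v : Fin k → ℝ, v ≠ 0 ∧ (S.map ((↑) : ℤ → ℝ)).mulVec v = x • v) ↔ ∃ j, L j = x)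
    (i : Fin k) :
    ∃ a : Fin l → ℝ,
      (∀ t : ℕ, t < l →
        ∑ j : Fin l, (L j.succ) ^ t * a j
          = ((f ⁻¹' {i}).ncard : ℝ) * (((S ^ t) i i : ℤ) : ℝ)
            - (((f ⁻¹' {i}).ncard : ℝ) ^ 2 / 2 ^ n) * (L 0) ^ t) ∧
      (∀ b : Fin l → ℝ,
        (∀ t : ℕ, t < l →
          ∑ j : Fin l, (L j.succ) ^ t * b j
            = ((f ⁻¹' {i}).ncard : ℝ) * (((S ^ t) i i : ℤ) : ℝ)
              - (((f ⁻¹' {i}).ncard : ℝ) ^ 2 / 2 ^ n) * (L 0) ^ t) → b = a) ∧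
      (∀ j : Fin l, ∃ r : ℕ, (2 ^ n : ℝ) * a j = r) := by
  classical
  set C : Finset (Fin n → ZMod 2) := {x | f x = i}
  have hC : (f ⁻¹' {i}).ncard = #C := by
    rw [show f ⁻¹' {i} = ↑C by ext; simp [C], Set.ncard_coe_finset]
  have hL0 := hf.eq_degree_of_strictAnti hmono heig
  set a : Fin l → ℝ := fun j => walshWeight C (L j.succ) / 2 ^ n
  have ha : ∀ t, ∑ j, L j.succ ^ t * a j = #C * (S ^ t) i i - #C ^ 2 / 2 ^ n * L 0 ^ t := by
    intro t
    have hmoment := hf.sum_pow_mul_walshWeight i hmono.injective (fun μ => (heig μ).mp) t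
    rw [Fin.sum_univ_succ, hL0, walshWeight_natCast] at hmoment
    simp only [a, mul_div_assoc', ← sum_div, hL0]
    field_simp
    push_cast at hmoment
    linarith
  simp only [hC]
  refine ⟨a, fun t _ => ha t, fun b hb => ?_, fun j => ⟨(walshWeight C (L j.succ)).toNat, ?_⟩⟩
  · exact (eq_of_forall_sum_pow_mul_eq (hmono.injective.comp (Fin.succ_injective l))
      fun t ht => (ha t).trans (hb t ht).symm).symm
  · rw [mul_div_cancel₀ _ (by positivity)]
    exact_mod_cast (Int.toNat_of_nonneg (walshWeight_nonneg C _)).symm
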